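/- For every prime p and every integer n with 2 ≤ n, the group X = ⨁_{k ∈ ℕ} ℤ/pⁿℤ is not super generalized co-Bassian: there exists a subgroup K of X such that X/K is not generalized co-Bassian. -/

import Mathlib

open scoped TensorProduct DirectSum

/-- An abelian group is divisible if every element is divisible by every positive integer. -/
def IsDivisibleGrp (G : Type*) [AddCommGroup G] : Prop :=
  ∀ n : ℕ, 0 < n → ∀ d : G, ∃ x : G, n • x = d

/-- An abelian group `G` is co-Bassian if for every subgroup `N`, every injective
homomorphism `G → G/N` is surjective. -/
def IsCoBassian (G : Type*) [AddCommGroup G] : Prop :=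
  ∀ N : AddSubgroup G, ∀ φ : G →+ G ⧸ N, Function.Injective φ → Function.Surjective φ

/-- A subgroup `A` of an abelian group is a direct summand if it has a complement. -/
def IsDirectSummand {G : Type*} [AddCommGroup G] (A : AddSubgroup G) : Prop :=
  ∃ C : AddSubgroup G, A ⊔ C = ⊤ ∧ A ⊓ C = ⊥

/-- An abelian group `G` is generalized co-Bassian if for every subgroup `N` and every
injective homomorphism `φ : G → G/N`, the image of `φ` is a direct summand of `G/N`. -/
def IsGenCoBassian (G : Type*) [AddCommGroup G] : Prop :=
  ∀ N : AddSubgroup G, ∀ φ : G →+ G ⧸ N, Function.Injective φ → IsDirectSummand φ.range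

/-! Splitting off one summand gives `X ≅ ℤ/pⁿ ⊕ X`, so `X` maps onto `G = ℤ/p ⊕ X`. Through
`X ≅ ℤ/pⁿ ⊕ X`, the endomorphism `ψ (a, y) = (0, (p^(n-1) a, y))` of `G` is injective, hence an
injection `G → G/0`. Its image contains `ψ (1, 0) = p^(n-1) • (0, (1, 0))`, yet no
`p^(n-1) • ψ b = ψ (p^(n-1) • b)` equals `ψ (1, 0)`, since `p^(n-1)` kills `ℤ/p`. So the image is not
pure, hence not a direct summand. -/

section

variable {G H : Type*} [AddCommGroup G] [AddCommGroup H]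

theorem IsDirectSummand.map {A : AddSubgroup G} (hA : IsDirectSummand A) (e : G ≃+ H) :
    IsDirectSummand (A.map e.toAddMonoidHom) := by
  obtain ⟨C, hsup, hinf⟩ := hA
  refine ⟨C.map e.toAddMonoidHom, ?_, ?_⟩
  · rw [← AddSubgroup.map_sup, hsup, AddSubgroup.map_top_of_surjective _ e.surjective]
  · rw [← AddSubgroup.map_inf _ _ _ e.injective, hinf, AddSubgroup.map_bot]

theorem IsDirectSummand.exists_nsmul_eq {A : AddSubgroup G} (hA : IsDirectSummand A) (k : ℕ)
    {y : G} (hy : k • y ∈ A) : ∃ a ∈ A, k • a = k • y := by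
  obtain ⟨C, hsup, hinf⟩ := hA
  obtain ⟨a, ha, c, hc, rfl⟩ := AddSubgroup.mem_sup.mp (hsup ▸ AddSubgroup.mem_top y)
  have hkc : k • c ∈ A ⊓ C := by
    refine ⟨?_, AddSubgroup.nsmul_mem _ hc k⟩
    simpa [smul_add] using AddSubgroup.sub_mem _ hy (AddSubgroup.nsmul_mem _ ha k)
  rw [hinf, AddSubgroup.mem_bot] at hkc
  exact ⟨a, ha, by rw [smul_add, hkc, add_zero]⟩

theorem IsGenCoBassian.of_addEquiv (hG : IsGenCoBassian G) (e : G ≃+ H) : IsGenCoBassian H := by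
  intro N' φ' hφ'
  let N := N'.comap e.toAddMonoidHom
  let c : G ⧸ N ≃+ H ⧸ N' :=
    QuotientAddGroup.congr N N' e (AddSubgroup.map_comap_eq_self_of_surjective e.surjective N')
  have hsum := (hG N (c.symm.toAddMonoidHom.comp (φ'.comp e.toAddMonoidHom))
    (c.symm.injective.comp (hφ'.comp e.injective))).map c
  rw [← AddMonoidHom.range_comp] at hsum
  convert hsum using 1
  ext x
  simp only [AddMonoidHom.mem_range]
  exact ⟨fun ⟨g, hg⟩ => ⟨e.symm g, by simpa using hg⟩, fun ⟨g, hg⟩ => ⟨e g, by simpa using hg⟩⟩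

theorem not_isGenCoBassian_of_injective {ψ : G →+ G} (hψ : Function.Injective ψ)
    (hψ_range : ¬IsDirectSummand ψ.range) : ¬IsGenCoBassian G := by
  intro hG
  let q : G ⧸ (⊥ : AddSubgroup G) ≃+ G := QuotientAddGroup.quotientBot
  have hsum := (hG ⊥ (q.symm.toAddMonoidHom.comp ψ) (q.symm.injective.comp hψ)).map q
  rw [← AddMonoidHom.range_comp] at hsum
  exact hψ_range (by convert hsum; ext; simp)

end

theorem DirectSum.nonempty_addEquiv_prod (M : Type*) [AddCommMonoid M] :
    Nonempty ((⨁ _ : ℕ, M) ≃+ M × ⨁ _ : ℕ, M) :=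
  ⟨(DirectSum.equivCongrLeft (Denumerable.eqv (Option ℕ)).symm).trans
    DirectSum.addEquivProdDirectSum⟩

def ZMod.mulRightHom {m k N : ℕ} (h : m * k = N) : ZMod m →+ ZMod N :=
  ZMod.lift m ⟨zmultiplesHom _ (k : ZMod N), by simp [← Nat.cast_mul, h]⟩

theorem ZMod.mulRightHom_one {m k N : ℕ} (h : m * k = N) : ZMod.mulRightHom h 1 = k := by
  unfold ZMod.mulRightHom
  simpa using ZMod.lift_coe m ⟨zmultiplesHom (ZMod N) (k : ZMod N), _⟩ 1

theorem ZMod.mulRightHom_injective {m k N : ℕ} (h : m * k = N) (hk : k ≠ 0) :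
    Function.Injective (ZMod.mulRightHom h) := by
  rw [ZMod.mulRightHom, ZMod.lift_injective]
  intro a ha
  simp only [zmultiplesHom_apply, zsmul_eq_mul] at ha
  rw [ZMod.intCast_zmod_eq_zero_iff_dvd]
  rw [← Int.cast_natCast, ← Int.cast_mul, ZMod.intCast_zmod_eq_zero_iff_dvd, ← h] at ha
  push_cast at ha
  exact (mul_dvd_mul_iff_right (by exact_mod_cast hk)).mp ha

section

variable {X : Type*} [AddCommGroup X]

theorem exists_quotient_addEquiv_zmod_prod {m N : ℕ} (e : X ≃+ ZMod N × X) (h : m ∣ N) :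
    ∃ K : AddSubgroup X, Nonempty (X ⧸ K ≃+ ZMod m × X) := by
  let π : X →+ ZMod m × X :=
    ((ZMod.castHom h (ZMod m)).toAddMonoidHom.prodMap (AddMonoidHom.id X)).comp e.toAddMonoidHom
  have hπ : Function.Surjective π :=
    ((ZMod.castHom_surjective h).prodMap Function.surjective_id).comp e.surjective
  exact ⟨π.ker, ⟨QuotientAddGroup.quotientKerEquivOfSurjective π hπ⟩⟩

theorem not_isGenCoBassian_zmod_prod {m k N : ℕ} (hm : m ≠ 1) (hk : k ≠ 0) (hmk : m ∣ k)
    (h : m * k = N) (e : X ≃+ ZMod N × X) : ¬IsGenCoBassian (ZMod m × X) := by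
  let ψ : ZMod m × X →+ ZMod m × X :=
    (0 : ZMod m × X →+ ZMod m).prod
      (e.symm.toAddMonoidHom.comp ((ZMod.mulRightHom h).prodMap (AddMonoidHom.id X)))
  have hψ : Function.Injective ψ := fun a b hab =>
    ((ZMod.mulRightHom_injective h hk).prodMap Function.injective_id)
      (e.symm.injective (congrArg Prod.snd hab))
  refine not_isGenCoBassian_of_injective hψ fun hsum => ?_
  have hy : k • ((0 : ZMod m), e.symm (1, 0)) = ψ (1, 0) := by
    simp [ψ, ← map_nsmul, ZMod.mulRightHom_one]
  obtain ⟨_, ⟨b, rfl⟩, hb⟩ := hsum.exists_nsmul_eq k (y := (0, e.symm (1, 0))) ⟨(1, 0), hy.symm⟩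
  rw [hy, ← map_nsmul] at hb
  have hkb : k • b.1 = 1 := congrArg Prod.fst (hψ hb)
  have := ZMod.nontrivial_iff.mpr hm
  rw [nsmul_eq_mul, (ZMod.natCast_eq_zero_iff k m).mpr hmk, zero_mul] at hkb
  exact zero_ne_one hkb

end

/-- for every prime `p` and `n ≥ 2`, the group `X = ⨁_{k ∈ ℕ} ℤ/pⁿℤ` is not
super generalized co-Bassian. -/
theorem directSum_not_superGenCoBassian (p : ℕ) (hp : p.Prime) (n : ℕ) (hn : 2 ≤ n) :
    ∃ K : AddSubgroup (⨁ _ : ℕ, ZMod (p ^ n)),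
      ¬IsGenCoBassian ((⨁ _ : ℕ, ZMod (p ^ n)) ⧸ K) := by
  obtain ⟨e⟩ := DirectSum.nonempty_addEquiv_prod (ZMod (p ^ n))
  obtain ⟨K, ⟨f⟩⟩ := exists_quotient_addEquiv_zmod_prod e (dvd_pow_self p (by omega))
  have hsplit : p * p ^ (n - 1) = p ^ n := by rw [← pow_succ', Nat.sub_add_cancel (by omega)]
  exact ⟨K, fun h => not_isGenCoBassian_zmod_prod hp.one_lt.ne' (pow_ne_zero _ hp.ne_zero)
    (dvd_pow_self p (by omega)) hsplit e (h.of_addEquiv f)⟩
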